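/- arXiv:1606.03106 — 4 statements merged into one kernel-verified Lean document; each statement's English description precedes it below -/
import Mathlib

section
/- Let Γ ⊆ ℝ×ℝ be a left-monotone set. Then for all s, t ∈ ℝ, the set Γ is c_{s,t}-finitely optimal, where c_{s,t}(x,y) = 1_{(−∞,s]}(x)·|y−t|. That is, whenever α is a finite measure concentrated on finitely many points of Γ and α' is a competitor of α, then ∫ c_{s,t} dα ≤ ∫ c_{s,t} dα'. -/
open MeasureTheory Set ENNReal

noncomputable section

/-- `π` is a transport plan between `μ` and `ν`: a probability measure on `ℝ × ℝ`
whose first marginal is `μ` and whose second marginal is `ν`. -/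
def IsTransport (μ ν : Measure ℝ) (π : Measure (ℝ × ℝ)) : Prop :=
  IsProbabilityMeasure π ∧ π.map Prod.fst = μ ∧ π.map Prod.snd = ν

/-- `π` is a martingale transport plan between `μ` and `ν`:
`∫ ρ(x)(y − x) dπ(x,y) = 0` for every bounded continuous `ρ : ℝ → ℝ`. -/
def IsMartingaleTransport (μ ν : Measure ℝ) (π : Measure (ℝ × ℝ)) : Prop :=
  IsTransport μ ν π ∧
    ∀ ρ : ℝ → ℝ, Continuous ρ → (∃ M : ℝ, ∀ x, |ρ x| ≤ M) →
      ∫ p : ℝ × ℝ, ρ p.1 * (p.2 - p.1) ∂π = 0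

/-- Convex order `μ ≤_cx ν`: `∫ f dμ ≤ ∫ f dν` for every convex `f : ℝ → ℝ`
for which both integrals exist. -/
def ConvexOrder (μ ν : Measure ℝ) : Prop :=
  ∀ f : ℝ → ℝ, ConvexOn ℝ Set.univ f → Integrable f μ → Integrable f ν →
    ∫ x, f x ∂μ ≤ ∫ x, f x ∂ν

/-- `α'` is a competitor of `α`: a finite measure with the same two marginals as `α`
such that for every `x`, `α ({x} × ℝ) = α' ({x} × ℝ)` and
`∫_{{x} × ℝ} y dα = ∫_{{x} × ℝ} y dα'`. -/
def IsCompetitor (α α' : Measure (ℝ × ℝ)) : Prop :=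
  IsFiniteMeasure α' ∧
    α'.map Prod.fst = α.map Prod.fst ∧ α'.map Prod.snd = α.map Prod.snd ∧
    ∀ x : ℝ,
      α ({x} ×ˢ (Set.univ : Set ℝ)) = α' ({x} ×ˢ (Set.univ : Set ℝ)) ∧
      ∫ p in ({x} ×ˢ (Set.univ : Set ℝ)), p.2 ∂α =
        ∫ p in ({x} ×ˢ (Set.univ : Set ℝ)), p.2 ∂α'

/-- `Γ` is `c`-finitely optimal: every finite measure concentrated on finitely many
points of `Γ` is cost-minimizing among its competitors. -/
def FinitelyOptimal (c : ℝ × ℝ → ℝ) (Γ : Set (ℝ × ℝ)) : Prop :=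
  ∀ α : Measure (ℝ × ℝ), IsFiniteMeasure α →
    (∃ S : Finset (ℝ × ℝ), ↑S ⊆ Γ ∧ α ((↑S : Set (ℝ × ℝ))ᶜ) = 0) →
    ∀ α' : Measure (ℝ × ℝ), IsCompetitor α α' →
      ∫⁻ p, ENNReal.ofReal (c p) ∂α ≤ ∫⁻ p, ENNReal.ofReal (c p) ∂α'

/-- `Γ ⊆ ℝ × ℝ` is left-monotone. -/
def LeftMonotone (Γ : Set (ℝ × ℝ)) : Prop :=
  ∀ ⦃x y₁ y₂ x' y' : ℝ⦄, (x, y₁) ∈ Γ → (x, y₂) ∈ Γ → (x', y') ∈ Γ →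
    x < x' → y₁ < y₂ → y' ≤ y₁ ∨ y₂ ≤ y'

/-- The cost function `c_{s,t}(x,y) = 1_{(−∞,s]}(x) · |y − t|`. -/
def cst (s t : ℝ) (p : ℝ × ℝ) : ℝ :=
  (Set.Iic s).indicator (fun _ => (1 : ℝ)) p.1 * |p.2 - t|

/-!
Weak duality. Let `S ⊆ Γ` be a finite set carrying `α`. It suffices to find `a(x)`, `b(x)`,
`ψ(y)` with `a(x) + b(x) y + ψ(y) ≤ c_{s,t}(x, y)` everywhere and equality on `S`: the integral of
`a(x) + b(x) y + ψ(y)` is the same against `α` and against any competitor `α'`, because the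
`a`-part only sees the masses of the columns `{x} × ℝ`, the `b`-part only their first moments and
the `ψ`-part only the second marginal.

Let `p ≤ t ≤ q` be the extreme `y`-values of the columns `x ≤ s` of `S` that straddle `t`, let
`g = max (|y - t|) (chord of |y - t| over [p, q])` and `ψ = |y - t| - g`. Left-monotonicity puts
every column `x ≤ s` inside one of `(-∞, p]`, `[p, q]`, `[q, ∞)`, on each of which `g` is affine,
and every point of a column `x > s` outside `(p, q)`, where `ψ = 0`.
-/

theorem cst_of_le {s t x : ℝ} (hx : x ≤ s) (y : ℝ) : cst s t (x, y) = |y - t| := by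
  simp [cst, hx]

theorem cst_of_lt {s t x : ℝ} (hx : s < x) (y : ℝ) : cst s t (x, y) = 0 := by
  simp [cst, not_le.2 hx]

theorem cst_nonneg (s t : ℝ) : 0 ≤ cst s t := fun _ =>
  mul_nonneg (indicator_nonneg (fun _ _ => zero_le_one) _) (abs_nonneg _)

theorem LeftMonotone.mono {Γ Δ : Set (ℝ × ℝ)} (hΓ : LeftMonotone Γ) (hΔ : Δ ⊆ Γ) :
    LeftMonotone Δ := fun _ _ _ _ _ h₁ h₂ h₃ => hΓ (hΔ h₁) (hΔ h₂) (hΔ h₃)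

namespace MeasureTheory

theorem ae_mem_of_map_eq {X Y : Type*} [MeasurableSpace X] [MeasurableSpace Y]
    {μ ν : Measure X} {f : X → Y} (hf : Measurable f) (h : μ.map f = ν.map f) {s : Set Y}
    (hs : MeasurableSet s) (hν : ∀ᵐ x ∂ν, f x ∈ s) : ∀ᵐ x ∂μ, f x ∈ s := by
  have hmap := (ae_map_iff hf.aemeasurable (p := (· ∈ s)) hs).2 hν
  exact ae_of_ae_map hf.aemeasurable (h ▸ hmap)

theorem integrable_of_ae_mem_finset {X E : Type*} [MeasurableSpace X]
    [MeasurableSingletonClass X] [NormedAddCommGroup E] {μ : Measure X} [IsFiniteMeasure μ]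
    {G : Finset X} (hG : ∀ᵐ x ∂μ, x ∈ G) (f : X → E) : Integrable f μ := by
  rw [Measure.ae_mem_finset_iff.1 hG, integrable_finsetSum_measure]
  exact fun x _ => (integrable_dirac enorm_lt_top).smul_measure (measure_ne_top μ _)

theorem integral_eq_sum_setIntegral_singleton_prod {α β E : Type*} [MeasurableSpace α]
    [MeasurableSingletonClass α] [MeasurableSpace β] [NormedAddCommGroup E] [NormedSpace ℝ E]
    {μ : Measure (α × β)} {F : Finset α} (hF : ∀ᵐ p ∂μ, p.1 ∈ F) {f : α × β → E}
    (hf : Integrable f μ) : ∫ p, f p ∂μ = ∑ x ∈ F, ∫ p in {x} ×ˢ univ, f p ∂μ := by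
  have hcover : ∀ᵐ p ∂μ, p ∈ ⋃ x ∈ F, ({x} ×ˢ univ : Set (α × β)) :=
    hF.mono fun p hp => mem_biUnion hp ⟨rfl, trivial⟩
  rw [← integral_biUnion_finset F (fun x _ => (measurableSet_singleton x).prod .univ)
    (fun x _ y _ hxy => disjoint_left.2 fun p hx hy => hxy (hx.1.symm.trans hy.1))
    (fun x _ => hf.integrableOn), Measure.restrict_eq_self_of_ae_mem hcover]

theorem setIntegral_singleton_prod_affine {α : Type*} [MeasurableSpace α]
    [MeasurableSingletonClass α] {μ : Measure (α × ℝ)} [IsFiniteMeasure μ]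
    (hint : Integrable (fun p => p.2) μ) (x : α) (a b : α → ℝ) :
    ∫ p in {x} ×ˢ univ, a p.1 + b p.1 * p.2 ∂μ =
      a x * μ.real ({x} ×ˢ univ) + b x * ∫ p in {x} ×ˢ univ, p.2 ∂μ := by
  have hfiber : EqOn (fun p : α × ℝ => a p.1 + b p.1 * p.2) (fun p => a x + b x * p.2)
      ({x} ×ˢ univ) := fun p hp => congrArg (fun x' => a x' + b x' * p.2) (hp.1 : p.1 = x)
  rw [setIntegral_congr_fun ((measurableSet_singleton x).prod .univ) hfiber,
    integral_add (integrable_const _) (hint.integrableOn.const_mul _), setIntegral_const,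
    integral_const_mul, smul_eq_mul, mul_comm]

end MeasureTheory

section Competitor

variable {α α' : Measure (ℝ × ℝ)} {S : Finset (ℝ × ℝ)}

theorem IsCompetitor.ae_mem_image_prod (h : IsCompetitor α α') (hα : ∀ᵐ p ∂α, p ∈ S) :
    ∀ᵐ p ∂α', p ∈ S.image Prod.fst ×ˢ S.image Prod.snd := by
  have hfst : ∀ᵐ p ∂α', p.1 ∈ (S.image Prod.fst : Set ℝ) :=
    ae_mem_of_map_eq measurable_fst h.2.1 (Finset.measurableSet _)
      (hα.mono fun p hp => Finset.mem_image_of_mem _ hp)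
  have hsnd : ∀ᵐ p ∂α', p.2 ∈ (S.image Prod.snd : Set ℝ) :=
    ae_mem_of_map_eq measurable_snd h.2.2.1 (Finset.measurableSet _)
      (hα.mono fun p hp => Finset.mem_image_of_mem _ hp)
  filter_upwards [hfst, hsnd] with p h1 h2 using Finset.mem_product.2 ⟨h1, h2⟩

variable [IsFiniteMeasure α]

theorem IsCompetitor.integral_affine_eq (h : IsCompetitor α α') (hα : ∀ᵐ p ∂α, p ∈ S)
    (a b : ℝ → ℝ) : ∫ p, a p.1 + b p.1 * p.2 ∂α = ∫ p, a p.1 + b p.1 * p.2 ∂α' := by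
  have := h.1
  have hα' := h.ae_mem_image_prod hα
  have hF : ∀ᵐ p ∂α, p.1 ∈ S.image Prod.fst := hα.mono fun p hp => Finset.mem_image_of_mem _ hp
  have hF' : ∀ᵐ p ∂α', p.1 ∈ S.image Prod.fst := hα'.mono fun p hp => (Finset.mem_product.1 hp).1
  rw [integral_eq_sum_setIntegral_singleton_prod hF (integrable_of_ae_mem_finset hα _),
    integral_eq_sum_setIntegral_singleton_prod hF' (integrable_of_ae_mem_finset hα' _)]
  refine Finset.sum_congr rfl fun x _ => ?_
  rw [setIntegral_singleton_prod_affine (integrable_of_ae_mem_finset hα _),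
    setIntegral_singleton_prod_affine (integrable_of_ae_mem_finset hα' _), measureReal_def,
    measureReal_def, (h.2.2.2 x).1, (h.2.2.2 x).2]

theorem IsCompetitor.integral_comp_snd_eq (h : IsCompetitor α α') (hα : ∀ᵐ p ∂α, p ∈ S)
    (ψ : ℝ → ℝ) : ∫ p, ψ p.2 ∂α = ∫ p, ψ p.2 ∂α' := by
  have hY : ∀ᵐ y ∂α.map Prod.snd, y ∈ S.image Prod.snd :=
    (ae_map_iff measurable_snd.aemeasurable (p := (· ∈ S.image Prod.snd))
      (Finset.measurableSet _)).2 (hα.mono fun p hp => Finset.mem_image_of_mem _ hp)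
  have hψ : AEStronglyMeasurable ψ (α.map Prod.snd) :=
    (integrable_of_ae_mem_finset hY ψ).aestronglyMeasurable
  calc ∫ p, ψ p.2 ∂α = ∫ y, ψ y ∂α.map Prod.snd :=
        (integral_map measurable_snd.aemeasurable hψ).symm
    _ = ∫ y, ψ y ∂α'.map Prod.snd := by rw [h.2.2.1]
    _ = ∫ p, ψ p.2 ∂α' := integral_map measurable_snd.aemeasurable (h.2.2.1 ▸ hψ)

theorem IsCompetitor.integral_le_of_dual (h : IsCompetitor α α') (hα : ∀ᵐ p ∂α, p ∈ S)
    {c : ℝ × ℝ → ℝ} {a b ψ : ℝ → ℝ} (hle : ∀ p, a p.1 + b p.1 * p.2 + ψ p.2 ≤ c p)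
    (heq : ∀ p ∈ S, a p.1 + b p.1 * p.2 + ψ p.2 = c p) : ∫ p, c p ∂α ≤ ∫ p, c p ∂α' := by
  have := h.1
  have hα' := h.ae_mem_image_prod hα
  calc ∫ p, c p ∂α = ∫ p, (a p.1 + b p.1 * p.2) + ψ p.2 ∂α :=
        integral_congr_ae (hα.mono fun p hp => (heq p hp).symm)
    _ = ∫ p, a p.1 + b p.1 * p.2 ∂α + ∫ p, ψ p.2 ∂α :=
        integral_add (integrable_of_ae_mem_finset hα _) (integrable_of_ae_mem_finset hα _)
    _ = ∫ p, a p.1 + b p.1 * p.2 ∂α' + ∫ p, ψ p.2 ∂α' := by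
        rw [h.integral_affine_eq hα, h.integral_comp_snd_eq hα]
    _ = ∫ p, (a p.1 + b p.1 * p.2) + ψ p.2 ∂α' :=
        (integral_add (integrable_of_ae_mem_finset hα' _) (integrable_of_ae_mem_finset hα' _)).symm
    _ ≤ ∫ p, c p ∂α' :=
        integral_mono (integrable_of_ae_mem_finset hα' _) (integrable_of_ae_mem_finset hα' _) hle

end Competitor

theorem finitelyOptimal_of_dual {c : ℝ × ℝ → ℝ} {Γ : Set (ℝ × ℝ)} (hc : 0 ≤ c)
    (hdual : ∀ S : Finset (ℝ × ℝ), ↑S ⊆ Γ → ∃ a b ψ : ℝ → ℝ,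
      (∀ p, a p.1 + b p.1 * p.2 + ψ p.2 ≤ c p) ∧
      ∀ p ∈ S, a p.1 + b p.1 * p.2 + ψ p.2 = c p) :
    FinitelyOptimal c Γ := by
  rintro α hα ⟨S, hSΓ, hS⟩ α' h
  have hαS : ∀ᵐ p ∂α, p ∈ S := ae_iff.2 hS
  have hα'S := h.ae_mem_image_prod hαS
  have := h.1
  obtain ⟨a, b, ψ, hle, heq⟩ := hdual S hSΓ
  rw [← ofReal_integral_eq_lintegral_ofReal (integrable_of_ae_mem_finset hαS c) (ae_of_all _ hc),
    ← ofReal_integral_eq_lintegral_ofReal (integrable_of_ae_mem_finset hα'S c) (ae_of_all _ hc)]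
  exact ENNReal.ofReal_le_ofReal (h.integral_le_of_dual hαS hle heq)

section Kink

variable {p q t y : ℝ}

-- `x / 0 = 0` makes the slope `0` when `p = q`; then `p = q = t` and the chord is `0`.
def kinkSlope (p q t : ℝ) : ℝ := (p + q - 2 * t) / (q - p)

def kinkChord (p q t y : ℝ) : ℝ := (t - p) + kinkSlope p q t * (y - p)

def kinkedAbs (p q t y : ℝ) : ℝ := max |y - t| (kinkChord p q t y)

variable (hp : p ≤ t) (hq : t ≤ q)
include hp hq

theorem abs_kinkSlope_le_one : |kinkSlope p q t| ≤ 1 := by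
  rcases (hp.trans hq).lt_or_eq with hpq | rfl
  · rw [kinkSlope, abs_div, abs_of_pos (sub_pos.2 hpq), div_le_one (sub_pos.2 hpq), abs_le]
    constructor <;> linarith
  · simp [kinkSlope]

theorem kinkChord_eq_right : kinkChord p q t y = (q - t) + kinkSlope p q t * (y - q) := by
  rcases (hp.trans hq).lt_or_eq with hpq | rfl
  · have hslope : kinkSlope p q t * (q - p) = p + q - 2 * t :=
      div_mul_cancel₀ _ (sub_ne_zero.2 hpq.ne')
    rw [kinkChord]
    linear_combination hslope
  · obtain rfl : p = t := le_antisymm hp hq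
    simp [kinkChord, kinkSlope]

theorem kinkChord_le_of_le_left (hy : y ≤ p) : kinkChord p q t y ≤ t - y := by
  have := (abs_le.1 (abs_kinkSlope_le_one hp hq)).1
  rw [kinkChord]
  nlinarith

theorem kinkChord_le_of_right_le (hy : q ≤ y) : kinkChord p q t y ≤ y - t := by
  have := (abs_le.1 (abs_kinkSlope_le_one hp hq)).2
  rw [kinkChord_eq_right hp hq]
  nlinarith

theorem abs_le_kinkChord (h₁ : p ≤ y) (h₂ : y ≤ q) : |y - t| ≤ kinkChord p q t y := by
  obtain ⟨hlo, hhi⟩ := abs_le.1 (abs_kinkSlope_le_one hp hq)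
  have hleft : t - y ≤ kinkChord p q t y := by rw [kinkChord]; nlinarith
  have hright : y - t ≤ kinkChord p q t y := by rw [kinkChord_eq_right hp hq]; nlinarith
  exact abs_le.2 ⟨by linarith, hright⟩

theorem kinkedAbs_eq_abs (hy : y ≤ p ∨ q ≤ y) : kinkedAbs p q t y = |y - t| := by
  refine max_eq_left ?_
  rcases hy with hy | hy
  · linarith [kinkChord_le_of_le_left hp hq hy, neg_le_abs (y - t)]
  · linarith [kinkChord_le_of_right_le hp hq hy, le_abs_self (y - t)]

theorem kinkedAbs_eq_kinkChord (h₁ : p ≤ y) (h₂ : y ≤ q) :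
    kinkedAbs p q t y = kinkChord p q t y :=
  max_eq_right (abs_le_kinkChord hp hq h₁ h₂)

end Kink

def Straddles (Γ : Set (ℝ × ℝ)) (t x : ℝ) : Prop :=
  ∃ y₁ y₂, (x, y₁) ∈ Γ ∧ (x, y₂) ∈ Γ ∧ y₁ < t ∧ t < y₂

namespace StraddleDual

variable (S : Finset (ℝ × ℝ)) (s t : ℝ)

-- With `t` inserted, `low ≤ t ≤ high`, and `low = high = t` when no column straddles `t`.
open Classical in
def straddleValues : Finset ℝ :=
  insert t ((S.filter fun r => r.1 ≤ s ∧ Straddles S t r.1).image Prod.snd)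

def low : ℝ := (straddleValues S s t).min' (Finset.insert_nonempty _ _)

def high : ℝ := (straddleValues S s t).max' (Finset.insert_nonempty _ _)

variable {S s t}

theorem low_le_self : low S s t ≤ t := Finset.min'_le _ _ (Finset.mem_insert_self _ _)

theorem self_le_high : t ≤ high S s t := Finset.le_max' _ _ (Finset.mem_insert_self _ _)

theorem mem_straddleValues {x y : ℝ} (hr : (x, y) ∈ S) (hx : x ≤ s) (hE : Straddles S t x) :
    y ∈ straddleValues S s t := by
  classical
  exact Finset.mem_insert_of_mem
    (Finset.mem_image.2 ⟨(x, y), Finset.mem_filter.2 ⟨hr, hx, hE⟩, rfl⟩)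

theorem low_le {x y : ℝ} (hr : (x, y) ∈ S) (hx : x ≤ s) (hE : Straddles S t x) : low S s t ≤ y :=
  Finset.min'_le _ _ (mem_straddleValues hr hx hE)

theorem le_high {x y : ℝ} (hr : (x, y) ∈ S) (hx : x ≤ s) (hE : Straddles S t x) :
    y ≤ high S s t :=
  Finset.le_max' _ _ (mem_straddleValues hr hx hE)

theorem exists_straddles_of_mem_straddleValues {y : ℝ} (hy : y ∈ straddleValues S s t)
    (hyt : y ≠ t) : ∃ x ≤ s, (x, y) ∈ S ∧ Straddles S t x := by
  classical
  obtain ⟨r, hr, rfl⟩ := Finset.mem_image.1 ((Finset.mem_insert.1 hy).resolve_left hyt)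
  obtain ⟨hrS, hrs, hrE⟩ := Finset.mem_filter.1 hr
  exact ⟨r.1, hrs, hrS, hrE⟩

theorem exists_of_low_lt (h : low S s t < t) :
    ∃ x ≤ s, (x, low S s t) ∈ S ∧ ∃ y, (x, y) ∈ S ∧ t < y := by
  obtain ⟨x, hx, hr, _, y, -, hy, -, hty⟩ :=
    exists_straddles_of_mem_straddleValues (Finset.min'_mem _ _) h.ne
  exact ⟨x, hx, hr, y, hy, hty⟩

theorem exists_of_lt_high (h : t < high S s t) :
    ∃ x ≤ s, (x, high S s t) ∈ S ∧ ∃ y, (x, y) ∈ S ∧ y < t := by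
  obtain ⟨x, hx, hr, y, _, hy, -, hyt, -⟩ :=
    exists_straddles_of_mem_straddleValues (Finset.max'_mem _ _) h.ne'
  exact ⟨x, hx, hr, y, hy, hyt⟩

variable (hS : LeftMonotone (S : Set (ℝ × ℝ)))
include hS

theorem le_low_or_high_le {x y : ℝ} (hx : s < x) (hr : (x, y) ∈ S) :
    y ≤ low S s t ∨ high S s t ≤ y := by
  rcases le_total y t with hyt | hty
  · left
    rcases low_le_self.lt_or_eq with hlow | hlow
    · obtain ⟨x', hx', hr', y', hy', hty'⟩ := exists_of_low_lt hlow
      exact (hS hr' hy' hr (hx'.trans_lt hx) (hlow.trans hty')).resolve_right (by linarith)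
    · exact hyt.trans hlow.ge
  · right
    rcases self_le_high.lt_or_eq with hhigh | hhigh
    · obtain ⟨x', hx', hr', y', hy', hyt'⟩ := exists_of_lt_high hhigh
      exact (hS hy' hr' hr (hx'.trans_lt hx) (hyt'.trans hhigh)).resolve_left (by linarith)
    · exact hhigh.ge.trans hty

theorem le_low_of_lt_low {x y w : ℝ} (hx : x ≤ s) (hy : (x, y) ∈ S) (hw : (x, w) ∈ S)
    (hyl : y < low S s t) : w ≤ low S s t := by
  have hE : ¬ Straddles S t x := fun hE => (low_le hy hx hE).not_gt hyl
  have hwt : w ≤ t := by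
    by_contra! hwt
    exact hE ⟨y, w, hy, hw, hyl.trans_le low_le_self, hwt⟩
  by_contra! hlw
  rcases (low_le_self : low S s t ≤ t).lt_or_eq with hlow | hlow
  · obtain ⟨x', -, hr', y', hy', hty'⟩ := exists_of_low_lt hlow
    rcases lt_trichotomy x x' with hxx | rfl | hxx
    · rcases hS hy hw hr' hxx (hyl.trans hlw) with h | h <;> linarith
    · exact hE ⟨low S s t, y', hr', hy', hlow, hty'⟩
    · rcases hS hr' hy' hw hxx (hlow.trans hty') with h | h <;> linarith
  · linarith

theorem high_le_of_high_lt {x y w : ℝ} (hx : x ≤ s) (hy : (x, y) ∈ S) (hw : (x, w) ∈ S)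
    (hhw : high S s t < w) : high S s t ≤ y := by
  have hE : ¬ Straddles S t x := fun hE => (le_high hw hx hE).not_gt hhw
  have hty : t ≤ y := by
    by_contra! hyt
    exact hE ⟨y, w, hy, hw, hyt, self_le_high.trans_lt hhw⟩
  by_contra! hyh
  rcases (self_le_high : t ≤ high S s t).lt_or_eq with hhigh | hhigh
  · obtain ⟨x', -, hr', y', hy', hyt'⟩ := exists_of_lt_high hhigh
    rcases lt_trichotomy x x' with hxx | rfl | hxx
    · rcases hS hy hw hr' hxx (hyh.trans hhw) with h | h <;> linarith
    · exact hE ⟨y', high S s t, hy', hr', hyt', hhigh⟩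
    · rcases hS hy' hr' hy hxx (hyt'.trans hhigh) with h | h <;> linarith
  · linarith

theorem column_le_low_or_mem_Icc_or_high_le {x : ℝ} (hx : x ≤ s) :
    (∀ y, (x, y) ∈ S → y ≤ low S s t) ∨
      (∀ y, (x, y) ∈ S → low S s t ≤ y ∧ y ≤ high S s t) ∨
      (∀ y, (x, y) ∈ S → high S s t ≤ y) := by
  by_contra! h
  obtain ⟨⟨y₁, hy₁, hly₁⟩, ⟨y₂, hy₂, hy₂mid⟩, ⟨y₃, hy₃, hy₃h⟩⟩ := h
  by_cases hly₂ : low S s t ≤ y₂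
  · linarith [high_le_of_high_lt hS hx hy₃ hy₂ (hy₂mid hly₂)]
  · linarith [le_low_of_lt_low hS hx hy₂ hy₁ (not_le.1 hly₂)]

theorem exists_affine_eq_kinkedAbs {x : ℝ} (hx : x ≤ s) :
    ∃ a b : ℝ, (∀ y, a + b * y ≤ kinkedAbs (low S s t) (high S s t) t y) ∧
      ∀ y, (x, y) ∈ S → a + b * y = kinkedAbs (low S s t) (high S s t) t y := by
  have hp : low S s t ≤ t := low_le_self
  have hq : t ≤ high S s t := self_le_high
  have habs (y : ℝ) : |y - t| ≤ kinkedAbs (low S s t) (high S s t) t y := le_max_left _ _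
  rcases column_le_low_or_mem_Icc_or_high_le hS hx with hcol | hcol | hcol
  · refine ⟨t, -1, fun y => by linarith [neg_le_abs (y - t), habs y], fun y hy => ?_⟩
    rw [kinkedAbs_eq_abs hp hq (.inl (hcol y hy)), abs_of_nonpos (by linarith [hcol y hy])]
    ring
  · set m := kinkSlope (low S s t) (high S s t) t
    have hchord (y : ℝ) : t - low S s t - m * low S s t + m * y =
        kinkChord (low S s t) (high S s t) t y := by
      rw [kinkChord]; ring
    refine ⟨t - low S s t - m * low S s t, m, fun y => (hchord y).trans_le (le_max_right _ _),
      fun y hy => ?_⟩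
    rw [kinkedAbs_eq_kinkChord hp hq (hcol y hy).1 (hcol y hy).2, hchord]
  · refine ⟨-t, 1, fun y => by linarith [le_abs_self (y - t), habs y], fun y hy => ?_⟩
    rw [kinkedAbs_eq_abs hp hq (.inr (hcol y hy)), abs_of_nonneg (by linarith [hcol y hy])]
    ring

theorem exists_column_dual_cst (x : ℝ) :
    ∃ a b : ℝ,
      (∀ y, a + b * y + (|y - t| - kinkedAbs (low S s t) (high S s t) t y) ≤ cst s t (x, y)) ∧
      ∀ y, (x, y) ∈ S →
        a + b * y + (|y - t| - kinkedAbs (low S s t) (high S s t) t y) = cst s t (x, y) := by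
  rcases le_or_gt x s with hx | hx
  · obtain ⟨a, b, hle, heq⟩ := exists_affine_eq_kinkedAbs hS hx
    refine ⟨a, b, fun y => ?_, fun y hy => ?_⟩ <;> rw [cst_of_le hx]
    · linarith [hle y]
    · linarith [heq y hy]
  · refine ⟨0, 0, fun y => ?_, fun y hy => ?_⟩ <;> rw [cst_of_lt hx]
    · have habs : |y - t| ≤ kinkedAbs (low S s t) (high S s t) t y := le_max_left _ _
      linarith
    · rw [kinkedAbs_eq_abs low_le_self self_le_high (le_low_or_high_le hS hx hy)]
      ring

theorem exists_dual_cst :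
    ∃ a b ψ : ℝ → ℝ, (∀ p, a p.1 + b p.1 * p.2 + ψ p.2 ≤ cst s t p) ∧
      ∀ p ∈ S, a p.1 + b p.1 * p.2 + ψ p.2 = cst s t p := by
  choose a b hle heq using exists_column_dual_cst (s := s) (t := t) hS
  exact ⟨a, b, fun y => |y - t| - kinkedAbs (low S s t) (high S s t) t y, fun p => hle p.1 p.2,
    fun p hp => heq p.1 p.2 hp⟩

end StraddleDual

/-- **Lemma 3.1.** A left-monotone set `Γ` is `c_{s,t}`-finitely optimal for all
`s, t ∈ ℝ`. -/
theorem leftMonotone_finitelyOptimal_cst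
    (Γ : Set (ℝ × ℝ)) (hΓ : LeftMonotone Γ) (s t : ℝ) :
    FinitelyOptimal (cst s t) Γ :=
  finitelyOptimal_of_dual (cst_nonneg s t) fun _ hS => StraddleDual.exists_dual_cst (hΓ.mono hS)
end
end

section
/- Let Γ ⊆ ℝ×ℝ be a left-monotone set, let α be a finite measure concentrated on finitely many points of Γ, and let α' be a competitor of α. Then for every s ∈ ℝ, the second marginal of the restriction of α to (−∞,s] × ℝ is dominated in convex order by the second marginal of the restriction of α' to (−∞,s] × ℝ; that is, for every convex function f: ℝ → ℝ, ∫ f(y) d(α|_{(−∞,s]×ℝ})(x,y) ≤ ∫ f(y) d(α'|_{(−∞,s]×ℝ})(x,y). -/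
open MeasureTheory Set ENNReal

noncomputable section

/-!
Both `α` and `α'` live on the finite grid `(S.image fst) ×ˢ (S.image snd)`, so everything reduces
to finite sums. Let `U` be the union of the open intervals `(y⁻, y⁺)` spanned by atoms `(x, y^±)`
of `α` with `x ≤ s`, and let `g ≥ f` agree with `f` off `U` and with the chord of `f` over the
closure of each component of `U`. On a fibre `x ≤ s` the atoms of `α` lie in the closure of a
single component (or at a single point), so `g` agrees there with an affine minorant of `g`;
equal fibre masses and barycentres then give `∑ α g ≤ ∑ α' g` on `x ≤ s`. By left-monotonicity
the atoms of `α` with `x > s` avoid `U`, where `g = f`. As `α` and `α'` have the same second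
marginal, the excess `∑ (α' - α) (g - f) ≥ 0` on `x > s` transfers the inequality from `g` to `f`.
-/

def chord (f : ℝ → ℝ) (p q t : ℝ) : ℝ :=
  f p + slope f p q * (t - p)

@[simp]
lemma chord_left (f : ℝ → ℝ) (p q : ℝ) : chord f p q p = f p := by
  simp [chord]

@[simp]
lemma chord_right (f : ℝ → ℝ) (p q : ℝ) : chord f p q q = f q := by
  rw [chord, ← sub_smul_slope_vadd f p q, smul_eq_mul, vadd_eq_add]
  ring

lemma chord_eq_mul_add (f : ℝ → ℝ) (p q t : ℝ) :
    chord f p q t = slope f p q * t + (f p - slope f p q * p) := by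
  rw [chord]; ring

lemma sub_chord (f : ℝ → ℝ) (p q t : ℝ) :
    f t - chord f p q t = (slope f p t - slope f p q) * (t - p) := by
  rw [← sub_smul_slope_vadd f p t, smul_eq_mul, vadd_eq_add, chord]
  ring

namespace ConvexOn

variable {f : ℝ → ℝ} {p q t : ℝ}

lemma le_chord (hf : ConvexOn ℝ univ f) (hpt : p ≤ t) (htq : t ≤ q) : f t ≤ chord f p q t := by
  rcases hpt.eq_or_lt with rfl | hpt
  · simp
  have : slope f p t ≤ slope f p q :=
    hf.slope_mono (mem_univ p) ⟨mem_univ t, hpt.ne'⟩ ⟨mem_univ q, (hpt.trans_le htq).ne'⟩ htq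
  nlinarith [sub_chord f p q t]

lemma chord_le (hf : ConvexOn ℝ univ f) (hpq : p < q) (ht : t ∉ Ioo p q) : chord f p q t ≤ f t := by
  rcases lt_trichotomy t p with htp | rfl | hpt
  · have : slope f p t ≤ slope f p q :=
      hf.slope_mono (mem_univ p) ⟨mem_univ t, htp.ne⟩ ⟨mem_univ q, hpq.ne'⟩ (htp.trans hpq).le
    nlinarith [sub_chord f p q t]
  · simp
  · have hqt : q ≤ t := not_lt.1 fun htq => ht ⟨hpt, htq⟩
    have : slope f p q ≤ slope f p t :=
      hf.slope_mono (mem_univ p) ⟨mem_univ q, hpq.ne'⟩ ⟨mem_univ t, hpt.ne'⟩ hqt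
    nlinarith [sub_chord f p q t]

lemma exists_affine_le (hf : ConvexOn ℝ univ f) (y : ℝ) :
    ∃ c : ℝ, ∀ t, f y + c * (t - y) ≤ f t := by
  refine ⟨derivWithin f (Ioi y) y, fun t => ?_⟩
  have hy : y ∈ interior univ := by simp
  rcases lt_trichotomy t y with hty | rfl | hyt
  · have h := (hf.slope_le_leftDeriv_of_mem_interior (mem_univ t) hy hty).trans
      (hf.leftDeriv_le_rightDeriv_of_mem_interior hy)
    rw [slope_def_field, div_le_iff₀ (sub_pos.2 hty)] at h
    nlinarith
  · simp
  · have h := hf.rightDeriv_le_slope_of_mem_interior hy (mem_univ t) hyt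
    rw [slope_def_field, le_div_iff₀ (sub_pos.2 hyt)] at h
    linarith

end ConvexOn

section ComponentIoo

variable {U : Set ℝ} {p q u v t : ℝ}

def IsComponentIoo (U : Set ℝ) (p q : ℝ) : Prop :=
  Ioo p q ⊆ U ∧ p ∉ U ∧ q ∉ U

/- For `t ∈ U` with `U` open and bounded, `componentLeft U t` and `componentRight U t` are the
endpoints of the connected component of `U` containing `t`. -/
def componentLeft (U : Set ℝ) (t : ℝ) : ℝ := sSup (Uᶜ ∩ Iic t)

def componentRight (U : Set ℝ) (t : ℝ) : ℝ := sInf (Uᶜ ∩ Ici t)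

lemma isComponentIoo_componentLeft_componentRight (hU : IsOpen U) (hb : Bornology.IsBounded U)
    (ht : t ∈ U) : IsComponentIoo U (componentLeft U t) (componentRight U t) ∧
      t ∈ Ioo (componentLeft U t) (componentRight U t) := by
  obtain ⟨m, hm⟩ := hb.bddBelow
  obtain ⟨M, hM⟩ := hb.bddAbove
  have hlow : (Uᶜ ∩ Iic t).Nonempty :=
    ⟨m - 1, fun h => by linarith [hm h], mem_Iic.2 (by linarith [hm ht])⟩
  have hup : (Uᶜ ∩ Ici t).Nonempty :=
    ⟨M + 1, fun h => by linarith [hM h], mem_Ici.2 (by linarith [hM ht])⟩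
  have hl : componentLeft U t ∈ Uᶜ ∩ Iic t :=
    (hU.isClosed_compl.inter isClosed_Iic).csSup_mem hlow bddAbove_Iic.inter_of_right
  have hr : componentRight U t ∈ Uᶜ ∩ Ici t :=
    (hU.isClosed_compl.inter isClosed_Ici).csInf_mem hup bddBelow_Ici.inter_of_right
  refine ⟨⟨fun z hz => ?_, hl.1, hr.1⟩, lt_of_le_of_ne hl.2 fun h => hl.1 (by rwa [h]),
    lt_of_le_of_ne' hr.2 fun h => hr.1 (by rwa [h])⟩
  by_contra hzU
  rcases le_total z t with hzt | htz
  · exact hz.1.not_ge (le_csSup bddAbove_Iic.inter_of_right ⟨hzU, hzt⟩)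
  · exact hz.2.not_ge (csInf_le bddBelow_Ici.inter_of_right ⟨hzU, htz⟩)

lemma IsComponentIoo.Icc_subset (h : IsComponentIoo U p q) (ht : t ∈ Ioo p q) (huv : Ioo u v ⊆ U)
    (htuv : t ∈ Icc u v) : Icc u v ⊆ Icc p q := by
  refine Icc_subset_Icc (not_lt.1 fun hup => h.2.1 (huv ⟨hup, ?_⟩))
    (not_lt.1 fun hqv => h.2.2 (huv ⟨?_, hqv⟩))
  · exact ht.1.trans_le htuv.2
  · exact htuv.1.trans_lt ht.2

lemma IsComponentIoo.componentLeft_componentRight_eq (hU : IsOpen U) (hb : Bornology.IsBounded U)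
    (h : IsComponentIoo U p q) (ht : t ∈ Ioo p q) :
    componentLeft U t = p ∧ componentRight U t = q := by
  obtain ⟨h', ht'⟩ := isComponentIoo_componentLeft_componentRight hU hb (h.1 ht)
  have h₁ := h.Icc_subset ht h'.1 (Ioo_subset_Icc_self ht')
  have h₂ := h'.Icc_subset ht' h.1 (Ioo_subset_Icc_self ht)
  rw [Icc_subset_Icc_iff (ht'.1.trans ht'.2).le] at h₁
  rw [Icc_subset_Icc_iff (ht.1.trans ht.2).le] at h₂
  exact ⟨le_antisymm h₂.1 h₁.1, le_antisymm h₁.2 h₂.2⟩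

end ComponentIoo

section ChordFill

open scoped Classical in
def chordFill (f : ℝ → ℝ) (U : Set ℝ) (t : ℝ) : ℝ :=
  if t ∈ U then chord f (componentLeft U t) (componentRight U t) t else f t

variable {f : ℝ → ℝ} {U : Set ℝ} {p q u v t : ℝ}

lemma chordFill_of_notMem (ht : t ∉ U) : chordFill f U t = f t := if_neg ht

lemma le_chordFill (hf : ConvexOn ℝ univ f) (hU : IsOpen U) (hb : Bornology.IsBounded U)
    (t : ℝ) : f t ≤ chordFill f U t := by
  by_cases ht : t ∈ U
  · obtain ⟨-, hmem⟩ := isComponentIoo_componentLeft_componentRight hU hb ht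
    rw [chordFill, if_pos ht]
    exact hf.le_chord hmem.1.le hmem.2.le
  · rw [chordFill_of_notMem ht]

lemma IsComponentIoo.chordFill_eq_chord (hU : IsOpen U) (hb : Bornology.IsBounded U)
    (h : IsComponentIoo U p q) (hpq : p < q) (ht : t ∈ Icc p q) :
    chordFill f U t = chord f p q t := by
  by_cases htU : t ∈ U
  · have ht' : t ∈ Ioo p q :=
      ⟨ht.1.lt_of_ne fun e => h.2.1 (e ▸ htU), ht.2.lt_of_ne' fun e => h.2.2 (e ▸ htU)⟩
    obtain ⟨hl, hr⟩ := h.componentLeft_componentRight_eq hU hb ht'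
    rw [chordFill, if_pos htU, hl, hr]
  · rw [chordFill_of_notMem htU]
    rcases ht.1.eq_or_lt with rfl | hpt
    · simp
    rcases ht.2.eq_or_lt with rfl | htq
    · simp
    · exact absurd (h.1 ⟨hpt, htq⟩) htU

lemma IsComponentIoo.chord_le_chordFill (hf : ConvexOn ℝ univ f) (hU : IsOpen U)
    (hb : Bornology.IsBounded U) (h : IsComponentIoo U p q) (hpq : p < q) (t : ℝ) :
    chord f p q t ≤ chordFill f U t := by
  by_cases ht : t ∈ Ioo p q
  · exact (h.chordFill_eq_chord hU hb hpq (Ioo_subset_Icc_self ht)).ge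
  · exact (hf.chord_le hpq ht).trans (le_chordFill hf hU hb t)

lemma exists_affine_le_chordFill_eqOn_Icc (hf : ConvexOn ℝ univ f) (hU : IsOpen U)
    (hb : Bornology.IsBounded U) (huv : u ≤ v) (hsub : Ioo u v ⊆ U) :
    ∃ c d : ℝ, (∀ t, c * t + d ≤ chordFill f U t) ∧ ∀ t ∈ Icc u v, c * t + d = chordFill f U t := by
  by_cases hmeet : ∃ t ∈ Icc u v, t ∈ U
  · obtain ⟨t, htuv, htU⟩ := hmeet
    obtain ⟨hcomp, ht⟩ := isComponentIoo_componentLeft_componentRight hU hb htU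
    set p := componentLeft U t
    set q := componentRight U t
    have hpq : p < q := ht.1.trans ht.2
    refine ⟨slope f p q, f p - slope f p q * p, fun t' => ?_, fun t' ht' => ?_⟩
    · rw [← chord_eq_mul_add]
      exact hcomp.chord_le_chordFill hf hU hb hpq t'
    · rw [← chord_eq_mul_add]
      exact (hcomp.chordFill_eq_chord hU hb hpq (hcomp.Icc_subset ht hsub htuv ht')).symm
  · push Not at hmeet
    obtain rfl : u = v := huv.antisymm <| not_lt.1 fun hlt =>
      hmeet ((u + v) / 2) ⟨by linarith, by linarith⟩ (hsub ⟨by linarith, by linarith⟩)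
    obtain ⟨c, hc⟩ := hf.exists_affine_le u
    refine ⟨c, f u - c * u, fun t => ?_, fun t ht => ?_⟩
    · linarith [hc t, le_chordFill hf hU hb t]
    · rw [Icc_self, mem_singleton_iff] at ht
      rw [ht, chordFill_of_notMem (hmeet u (left_mem_Icc.2 le_rfl))]
      ring

end ChordFill

def fiberSpan (P : Set (ℝ × ℝ)) : Set ℝ :=
  {y | ∃ p ∈ P, ∃ q ∈ P, p.1 = q.1 ∧ y ∈ Ioo p.2 q.2}

section FiberSpan

variable {P : Set (ℝ × ℝ)}

lemma Ioo_subset_fiberSpan {p q : ℝ × ℝ} (hp : p ∈ P) (hq : q ∈ P) (h : p.1 = q.1) :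
    Ioo p.2 q.2 ⊆ fiberSpan P :=
  fun _ hy => ⟨p, hp, q, hq, h, hy⟩

lemma isOpen_fiberSpan (P : Set (ℝ × ℝ)) : IsOpen (fiberSpan P) := by
  refine isOpen_iff_mem_nhds.2 fun y ⟨p, hp, q, hq, h, hy⟩ => ?_
  exact Filter.mem_of_superset (Ioo_mem_nhds hy.1 hy.2) (Ioo_subset_fiberSpan hp hq h)

lemma isBounded_fiberSpan (hP : Bornology.IsBounded (Prod.snd '' P)) :
    Bornology.IsBounded (fiberSpan P) := by
  obtain ⟨⟨m, hm⟩, ⟨M, hM⟩⟩ := isBounded_iff_bddBelow_bddAbove.1 hP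
  refine (Metric.isBounded_Icc m M).subset ?_
  rintro y ⟨p, hp, q, hq, -, hpy, hyq⟩
  exact ⟨(hm (mem_image_of_mem _ hp)).trans hpy.le, hyq.le.trans (hM (mem_image_of_mem _ hq))⟩

lemma LeftMonotone.notMem_fiberSpan {Γ : Set (ℝ × ℝ)} (hΓ : LeftMonotone Γ) {s : ℝ}
    (hPΓ : P ⊆ Γ) (hPs : ∀ p ∈ P, p.1 ≤ s) {r : ℝ × ℝ} (hr : r ∈ Γ) (hsr : s < r.1) :
    r.2 ∉ fiberSpan P := by
  rintro ⟨p, hp, q, hq, hpq, hpr, hrq⟩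
  have hq' : (p.1, q.2) ∈ Γ := hpq ▸ hPΓ hq
  rcases hΓ (hPΓ hp) hq' hr ((hPs p hp).trans_lt hsr) (hpr.trans hrq) with h | h
  · exact h.not_gt hpr
  · exact h.not_gt hrq

end FiberSpan

lemma sum_mul_le_sum_mul_of_affine_le {ι : Type*} {K : Finset ι} {a b : ι → ℝ} {y : ι → ℝ}
    {g : ℝ → ℝ} {c d : ℝ} (hb : ∀ i ∈ K, 0 ≤ b i) (hmass : ∑ i ∈ K, a i = ∑ i ∈ K, b i)
    (hmean : ∑ i ∈ K, a i * y i = ∑ i ∈ K, b i * y i) (hle : ∀ t, c * t + d ≤ g t)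
    (heq : ∀ i ∈ K, a i ≠ 0 → c * y i + d = g (y i)) :
    ∑ i ∈ K, a i * g (y i) ≤ ∑ i ∈ K, b i * g (y i) := by
  have affine (w : ι → ℝ) :
      ∑ i ∈ K, w i * (c * y i + d) = c * ∑ i ∈ K, w i * y i + d * ∑ i ∈ K, w i := by
    rw [Finset.mul_sum, Finset.mul_sum, ← Finset.sum_add_distrib]
    exact Finset.sum_congr rfl fun i _ => by ring
  calc ∑ i ∈ K, a i * g (y i) = ∑ i ∈ K, a i * (c * y i + d) := by
        refine Finset.sum_congr rfl fun i hi => ?_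
        by_cases hai : a i = 0
        · simp [hai]
        · rw [heq i hi hai]
    _ = ∑ i ∈ K, b i * (c * y i + d) := by rw [affine, affine, hmass, hmean]
    _ ≤ ∑ i ∈ K, b i * g (y i) :=
        Finset.sum_le_sum fun i hi => mul_le_mul_of_nonneg_left (hle _) (hb i hi)

lemma sum_mul_comp_eq_of_sum_fiber_eq {ι κ : Type*} [DecidableEq κ] {K : Finset ι}
    {a b : ι → ℝ} {ψ : ι → κ}
    (h : ∀ y, ∑ i ∈ K with ψ i = y, a i = ∑ i ∈ K with ψ i = y, b i) (φ : κ → ℝ) :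
    ∑ i ∈ K, a i * φ (ψ i) = ∑ i ∈ K, b i * φ (ψ i) := by
  have fiberwise (w : ι → ℝ) :
      ∑ i ∈ K, w i * φ (ψ i) = ∑ y ∈ K.image ψ, (∑ i ∈ K with ψ i = y, w i) * φ y := by
    rw [← Finset.sum_fiberwise_of_maps_to fun i hi => Finset.mem_image_of_mem ψ hi]
    refine Finset.sum_congr rfl fun y _ => ?_
    rw [Finset.sum_mul]
    exact Finset.sum_congr rfl fun i hi => by rw [(Finset.mem_filter.1 hi).2]
  simp only [fiberwise, h]

lemma sum_filter_le_sum_filter_of_fiberwise {ι κ : Type*} [DecidableEq κ] {K : Finset ι}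
    {F G : ι → ℝ} {ψ : ι → κ} {Q : κ → Prop} [DecidablePred Q]
    (h : ∀ x, Q x → ∑ i ∈ K with ψ i = x, F i ≤ ∑ i ∈ K with ψ i = x, G i) :
    ∑ i ∈ K with Q (ψ i), F i ≤ ∑ i ∈ K with Q (ψ i), G i := by
  have fiberwise (W : ι → ℝ) :
      ∑ i ∈ K with Q (ψ i), W i = ∑ x ∈ K.image ψ with Q x, ∑ i ∈ K with ψ i = x, W i := by
    rw [Finset.sum_fiberwise_eq_sum_filter]
    refine Finset.sum_congr (Finset.filter_congr fun i hi => ?_) fun _ _ => rfl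
    exact ⟨fun h => Finset.mem_filter.2 ⟨Finset.mem_image_of_mem _ hi, h⟩,
      fun h => (Finset.mem_filter.1 h).2⟩
  rw [fiberwise, fiberwise]
  exact Finset.sum_le_sum fun x hx => h x (Finset.mem_filter.1 hx).2

lemma sum_fiber_mul_chordFill_le {T : Finset (ℝ × ℝ)} {a b : ℝ × ℝ → ℝ} {P : Set (ℝ × ℝ)}
    {f : ℝ → ℝ} (hf : ConvexOn ℝ univ f) (hP : Bornology.IsBounded (Prod.snd '' P)) {x : ℝ}
    (hb : ∀ p, 0 ≤ b p) (hmass : ∑ p ∈ T with p.1 = x, a p = ∑ p ∈ T with p.1 = x, b p)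
    (hmean : ∑ p ∈ T with p.1 = x, a p * p.2 = ∑ p ∈ T with p.1 = x, b p * p.2)
    (hsupp : ∀ p ∈ T, p.1 = x → a p ≠ 0 → p ∈ P) :
    ∑ p ∈ T with p.1 = x, a p * chordFill f (fiberSpan P) p.2 ≤
      ∑ p ∈ T with p.1 = x, b p * chordFill f (fiberSpan P) p.2 := by
  obtain ⟨u, v, huv, hsub, hK⟩ : ∃ u v, u ≤ v ∧ Ioo u v ⊆ fiberSpan P ∧
      ∀ p ∈ T, p.1 = x → a p ≠ 0 → p.2 ∈ Icc u v := by
    set K := {p ∈ T | p.1 = x ∧ a p ≠ 0}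
    have hmemK {p} (hp : p ∈ T) (hpx : p.1 = x) (hap : a p ≠ 0) : p ∈ K :=
      Finset.mem_filter.2 ⟨hp, hpx, hap⟩
    rcases K.eq_empty_or_nonempty with hK | hK
    · refine ⟨0, 0, le_rfl, by simp, fun p hp hpx hap => ?_⟩
      simpa [hK] using hmemK hp hpx hap
    obtain ⟨pu, hpu, hmin⟩ := K.exists_min_image Prod.snd hK
    obtain ⟨pv, hpv, hmax⟩ := K.exists_max_image Prod.snd hK
    obtain ⟨hpuT, hpux, hpua⟩ := Finset.mem_filter.1 hpu
    obtain ⟨hpvT, hpvx, hpva⟩ := Finset.mem_filter.1 hpv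
    refine ⟨pu.2, pv.2, hmin pv hpv, Ioo_subset_fiberSpan (hsupp _ hpuT hpux hpua)
      (hsupp _ hpvT hpvx hpva) (hpux.trans hpvx.symm), fun p hp hpx hap => ?_⟩
    exact ⟨hmin p (hmemK hp hpx hap), hmax p (hmemK hp hpx hap)⟩
  obtain ⟨c, d, hle, heq⟩ := exists_affine_le_chordFill_eqOn_Icc hf (isOpen_fiberSpan P)
    (isBounded_fiberSpan hP) huv hsub
  refine sum_mul_le_sum_mul_of_affine_le (fun p _ => hb p) hmass hmean hle fun p hp hap => ?_
  obtain ⟨hpT, hpx⟩ := Finset.mem_filter.1 hp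
  exact heq _ (hK p hpT hpx hap)

theorem LeftMonotone.sum_fst_le_mul_le_of_convexOn {Γ : Set (ℝ × ℝ)} (hΓ : LeftMonotone Γ)
    {T : Finset (ℝ × ℝ)} {a b : ℝ × ℝ → ℝ} (hb : ∀ p, 0 ≤ b p)
    (haΓ : ∀ p ∈ T, a p ≠ 0 → p ∈ Γ)
    (hmass : ∀ x, ∑ p ∈ T with p.1 = x, a p = ∑ p ∈ T with p.1 = x, b p)
    (hmean : ∀ x, ∑ p ∈ T with p.1 = x, a p * p.2 = ∑ p ∈ T with p.1 = x, b p * p.2)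
    (hsnd : ∀ y, ∑ p ∈ T with p.2 = y, a p = ∑ p ∈ T with p.2 = y, b p)
    (s : ℝ) {f : ℝ → ℝ} (hf : ConvexOn ℝ univ f) :
    ∑ p ∈ T with p.1 ≤ s, a p * f p.2 ≤ ∑ p ∈ T with p.1 ≤ s, b p * f p.2 := by
  set P : Finset (ℝ × ℝ) := {p ∈ T | p.1 ≤ s ∧ a p ≠ 0}
  have hP : Bornology.IsBounded (Prod.snd '' (P : Set (ℝ × ℝ))) :=
    (P.finite_toSet.image _).isBounded
  set g := chordFill f (fiberSpan P)
  have hfg : ∀ t, f t ≤ g t := le_chordFill hf (isOpen_fiberSpan _) (isBounded_fiberSpan hP)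
  have hleft_g : ∑ p ∈ T with p.1 ≤ s, a p * g p.2 ≤ ∑ p ∈ T with p.1 ≤ s, b p * g p.2 :=
    sum_filter_le_sum_filter_of_fiberwise fun x hxs => sum_fiber_mul_chordFill_le hf hP hb
      (hmass x) (hmean x) fun p hp hpx hap => Finset.mem_filter.2 ⟨hp, hpx ▸ hxs, hap⟩
  have hright_eq : ∑ p ∈ T with ¬p.1 ≤ s, a p * g p.2 = ∑ p ∈ T with ¬p.1 ≤ s, a p * f p.2 := by
    refine Finset.sum_congr rfl fun p hp => ?_
    obtain ⟨hpT, hps⟩ := Finset.mem_filter.1 hp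
    by_cases hap : a p = 0
    · simp [hap]
    have hPΓ : (P : Set (ℝ × ℝ)) ⊆ Γ := fun q hq =>
      haΓ q (Finset.mem_filter.1 hq).1 (Finset.mem_filter.1 hq).2.2
    have hPs : ∀ q ∈ (P : Set (ℝ × ℝ)), q.1 ≤ s := fun q hq => (Finset.mem_filter.1 hq).2.1
    rw [show g p.2 = f p.2 from chordFill_of_notMem
      (hΓ.notMem_fiberSpan hPΓ hPs (haΓ p hpT hap) (not_le.1 hps))]
  have hright_le : ∑ p ∈ T with ¬p.1 ≤ s, b p * f p.2 ≤ ∑ p ∈ T with ¬p.1 ≤ s, b p * g p.2 :=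
    Finset.sum_le_sum fun p _ => mul_le_mul_of_nonneg_left (hfg _) (hb p)
  have htotal_f := sum_mul_comp_eq_of_sum_fiber_eq hsnd f
  have htotal_g := sum_mul_comp_eq_of_sum_fiber_eq hsnd g
  rw [← Finset.sum_filter_add_sum_filter_not T (fun p => p.1 ≤ s),
    ← Finset.sum_filter_add_sum_filter_not T (fun p => p.1 ≤ s)] at htotal_f htotal_g
  linarith

section FinitelySupported

variable {X : Type*} [MeasurableSpace X] [MeasurableSingletonClass X] {μ : Measure X}
  [IsFiniteMeasure μ] {T : Finset X}

lemma setIntegral_eq_sum_of_measure_compl_eq_zero (hT : μ (↑T)ᶜ = 0) (A : Set X)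
    [DecidablePred (· ∈ A)] (h : X → ℝ) :
    ∫ x in A, h x ∂μ = ∑ x ∈ T with x ∈ A, μ.real {x} * h x := by
  have hA : (↑(T.filter (· ∈ A)) : Set X) =ᵐ[μ] A := by
    have : (↑(T.filter (· ∈ A)) : Set X) = A ∩ ↑T := by ext; simp [and_comm]
    simpa [this] using (ae_eq_refl A).inter (ae_eq_univ.2 hT)
  rw [← setIntegral_congr_set hA, setIntegral_finset _ IntegrableOn.finset]
  rfl

lemma measureReal_eq_sum_of_measure_compl_eq_zero (hT : μ (↑T)ᶜ = 0) (A : Set X)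
    [DecidablePred (· ∈ A)] : μ.real A = ∑ x ∈ T with x ∈ A, μ.real {x} := by
  simpa using setIntegral_eq_sum_of_measure_compl_eq_zero hT A fun _ => (1 : ℝ)

lemma sum_measureReal_singleton_eq_of_measure_eq {ν : Measure X} [IsFiniteMeasure ν]
    (hμT : μ (↑T)ᶜ = 0) (hνT : ν (↑T)ᶜ = 0) {A : Set X} [DecidablePred (· ∈ A)]
    (h : μ A = ν A) : ∑ x ∈ T with x ∈ A, μ.real {x} = ∑ x ∈ T with x ∈ A, ν.real {x} := by
  rw [← measureReal_eq_sum_of_measure_compl_eq_zero hμT,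
    ← measureReal_eq_sum_of_measure_compl_eq_zero hνT, measureReal_def, measureReal_def, h]

end FinitelySupported

lemma mem_of_measureReal_singleton_ne_zero {X : Type*} [MeasurableSpace X] {μ : Measure X}
    {S : Set X} (hS : μ Sᶜ = 0) {x : X} (hx : μ.real {x} ≠ 0) : x ∈ S := by
  by_contra hxS
  have hx0 : μ {x} = 0 := measure_mono_null (singleton_subset_iff.2 (mem_compl hxS)) hS
  exact hx (by rw [measureReal_def, hx0, ENNReal.toReal_zero])

lemma measure_compl_prod_eq_zero_of_map_eq {X Y : Type*} [MeasurableSpace X]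
    [MeasurableSpace Y] {μ ν : Measure (X × Y)} (hfst : μ.map Prod.fst = ν.map Prod.fst)
    (hsnd : μ.map Prod.snd = ν.map Prod.snd) {A : Set X} {B : Set Y} (hA : MeasurableSet A)
    (hB : MeasurableSet B) (hν : ν (A ×ˢ B)ᶜ = 0) : μ (A ×ˢ B)ᶜ = 0 := by
  have hfst' : μ (Prod.fst ⁻¹' Aᶜ) = ν (Prod.fst ⁻¹' Aᶜ) := by
    rw [← Measure.map_apply measurable_fst hA.compl, hfst,
      Measure.map_apply measurable_fst hA.compl]
  have hsnd' : μ (Prod.snd ⁻¹' Bᶜ) = ν (Prod.snd ⁻¹' Bᶜ) := by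
    rw [← Measure.map_apply measurable_snd hB.compl, hsnd,
      Measure.map_apply measurable_snd hB.compl]
  simp only [compl_prod_eq_union, prod_univ, univ_prod, measure_union_null_iff] at hν ⊢
  exact ⟨hfst' ▸ hν.1, hsnd' ▸ hν.2⟩

/-- For a finite measure `α` concentrated on finitely many points of a left-monotone
set `Γ` and a competitor `α'` of `α`, for every `s` the second marginal of
`α` restricted to `(−∞,s] × ℝ` is dominated in convex order by the second marginal of
`α'` restricted to `(−∞,s] × ℝ`. -/
theorem restriction_snd_convex_order
    (Γ : Set (ℝ × ℝ)) (hΓ : LeftMonotone Γ)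
    (α : Measure (ℝ × ℝ)) [IsFiniteMeasure α]
    (hfin : ∃ S : Finset (ℝ × ℝ), ↑S ⊆ Γ ∧ α ((↑S : Set (ℝ × ℝ))ᶜ) = 0)
    (α' : Measure (ℝ × ℝ)) (hcomp : IsCompetitor α α')
    (s : ℝ) (f : ℝ → ℝ) (hf : ConvexOn ℝ Set.univ f) :
    ∫ p in (Set.Iic s ×ˢ (Set.univ : Set ℝ)), f p.2 ∂α ≤
      ∫ p in (Set.Iic s ×ˢ (Set.univ : Set ℝ)), f p.2 ∂α' := by
  classical
  obtain ⟨S, hSΓ, hS⟩ := hfin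
  obtain ⟨hα', hfst, hsnd, hfiber⟩ := hcomp
  set T := S.image Prod.fst ×ˢ S.image Prod.snd
  have hαT : α (↑T)ᶜ = 0 := measure_mono_null (compl_subset_compl.2 fun p hp =>
    Finset.mem_product.2 ⟨Finset.mem_image_of_mem _ hp, Finset.mem_image_of_mem _ hp⟩) hS
  have hα'T : α' (↑T)ᶜ = 0 := by
    rw [Finset.coe_product] at hαT ⊢
    exact measure_compl_prod_eq_zero_of_map_eq hfst hsnd (Finset.measurableSet _)
      (Finset.measurableSet _) hαT
  rw [setIntegral_eq_sum_of_measure_compl_eq_zero hαT,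
    setIntegral_eq_sum_of_measure_compl_eq_zero hα'T]
  simp only [mem_prod, mem_Iic, mem_univ, and_true]
  refine hΓ.sum_fst_le_mul_le_of_convexOn (fun _ => measureReal_nonneg)
    (fun p _ hp => hSΓ (mem_of_measureReal_singleton_ne_zero hS hp)) (fun x => ?_) (fun x => ?_)
    (fun y => ?_) s hf
  · simpa using sum_measureReal_singleton_eq_of_measure_eq hαT hα'T (hfiber x).1
  · simpa [setIntegral_eq_sum_of_measure_compl_eq_zero hαT,
      setIntegral_eq_sum_of_measure_compl_eq_zero hα'T] using (hfiber x).2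
  · have hy := congrArg (fun m : Measure ℝ => m {y}) hsnd
    simp only [Measure.map_apply measurable_snd (measurableSet_singleton y)] at hy
    simpa using sum_measureReal_singleton_eq_of_measure_eq hαT hα'T hy.symm
end
end

section
/- Let β and β' be finitely supported nonnegative finite measures on ℝ with equal total mass β(ℝ) = β'(ℝ) and equal barycenters ∫ y dβ(y) = ∫ y dβ'(y). Suppose β is concentrated on the closed interval [a,b] and β'({y}) ≤ β({y}) for every y in the open interval (a,b). Then β ≤_cx β', i.e. ∫ f dβ ≤ ∫ f dβ' for every convex function f: ℝ → ℝ. -/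
/-!
Take an affine `ℓ` with `f ≤ ℓ` on `[a, b]` and `ℓ ≤ f` off `(a, b)`: the secant of `f` over
`[a, b]`, or a supporting line at `a` when `a = b`. Equal masses and barycenters give
`∫ ℓ dβ = ∫ ℓ dβ'`, and the atoms satisfy `β{y} (f - ℓ)(y) ≤ β'{y} (f - ℓ)(y)`: on `(a, b)`
because `f - ℓ ≤ 0` and `β' ≤ β` there, at `a` and `b` because `f = ℓ`, and off `[a, b]`
because `β` vanishes there while `f - ℓ ≥ 0`.
-/

open MeasureTheory Set

section FiniteSupport

variable {X E : Type*} [MeasurableSpace X] [MeasurableSingletonClass X]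
  [NormedAddCommGroup E] {μ : Measure X} [IsFiniteMeasure μ] {S : Finset X}

theorem integrable_of_measure_compl_finset_eq_zero (hS : μ (↑S)ᶜ = 0) (g : X → E) :
    Integrable g μ := by
  have hμ : μ.restrict S = μ := Measure.restrict_eq_self_of_ae_mem (mem_ae_iff.mpr hS)
  rw [← hμ, ← biUnion_of_singleton (S : Set X)]
  exact integrableOn_finset_iUnion.mpr fun x _ => integrableOn_singleton

theorem integral_eq_sum_of_measure_compl_finset_eq_zero [NormedSpace ℝ E] [CompleteSpace E]
    (hS : μ (↑S)ᶜ = 0) (g : X → E) : ∫ x, g x ∂μ = ∑ x ∈ S, μ.real {x} • g x := by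
  have hμ : μ.restrict S = μ := Measure.restrict_eq_self_of_ae_mem (mem_ae_iff.mpr hS)
  rw [← setIntegral_finset S (integrable_of_measure_compl_finset_eq_zero hS g).integrableOn, hμ]

end FiniteSupport

theorem ConvexOn.add_rightDeriv_mul_sub_le {f : ℝ → ℝ} (hf : ConvexOn ℝ univ f) (x y : ℝ) :
    f x + derivWithin f (Ioi x) x * (y - x) ≤ f y := by
  have hx : x ∈ interior univ := by simp
  rcases lt_trichotomy y x with hyx | rfl | hxy
  · have h := (hf.slope_le_leftDeriv_of_mem_interior (mem_univ y) hx hyx).trans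
      (hf.leftDeriv_le_rightDeriv_of_mem_interior hx)
    rw [slope_def_field, div_le_iff₀ (sub_pos.mpr hyx)] at h
    linarith
  · simp
  · have h := hf.rightDeriv_le_slope_of_mem_interior hx (mem_univ y) hxy
    rw [slope_def_field, le_div_iff₀ (sub_pos.mpr hxy)] at h
    linarith

theorem ConvexOn.exists_affine_ge_on_Icc_le_off_Ioo {f : ℝ → ℝ} (hf : ConvexOn ℝ univ f)
    {a b : ℝ} (hab : a ≤ b) :
    ∃ c d : ℝ, (∀ y ∈ Icc a b, f y ≤ c * y + d) ∧ ∀ y ∉ Ioo a b, c * y + d ≤ f y := by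
  rcases hab.eq_or_lt with rfl | hab
  · refine ⟨derivWithin f (Ioi a) a, f a - derivWithin f (Ioi a) a * a, ?_, fun y _ => ?_⟩
    · rintro y ⟨hay, hya⟩
      obtain rfl := le_antisymm hya hay
      linarith
    · linarith [hf.add_rightDeriv_mul_sub_le a y]
  set c := slope f a b
  have hmono := hf.slope_mono (mem_univ a)
  have hne : ∀ {y}, y ≠ a → y ∈ univ \ {a} := fun hy => ⟨mem_univ _, hy⟩
  refine ⟨c, f a - c * a, ?_, ?_⟩
  · rintro y ⟨hay, hyb⟩
    rcases hay.eq_or_lt with rfl | hay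
    · linarith
    have h := hmono (hne hay.ne') (hne hab.ne') hyb
    rw [slope_def_field, div_le_iff₀ (sub_pos.mpr hay)] at h
    linarith
  · intro y hy
    rcases lt_trichotomy y a with hya | rfl | hay
    · have h := hmono (hne hya.ne) (hne hab.ne') (hya.trans hab).le
      rw [slope_def_field, div_le_iff_of_neg (sub_neg.mpr hya)] at h
      linarith
    · linarith
    · have hby : b ≤ y := not_lt.mp fun hyb => hy ⟨hay, hyb⟩
      have h := hmono (hne hab.ne') (hne hay.ne') hby
      rw [slope_def_field f a y, le_div_iff₀ (sub_pos.mpr hay)] at h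
      linarith

theorem integral_affine_eq_of_measure_univ_eq_of_integral_id_eq {μ ν : Measure ℝ}
    [IsFiniteMeasure μ] [IsFiniteMeasure ν] (hμ : Integrable id μ) (hν : Integrable id ν)
    (hmass : μ univ = ν univ) (hbary : ∫ y, y ∂μ = ∫ y, y ∂ν) (c d : ℝ) :
    ∫ y, c * y + d ∂μ = ∫ y, c * y + d ∂ν := by
  have hmass' : μ.real univ = ν.real univ := by simp only [measureReal_def, hmass]
  have hμc : Integrable (fun y => c * y) μ := hμ.const_mul c
  have hνc : Integrable (fun y => c * y) ν := hν.const_mul c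
  rw [integral_add hμc (integrable_const d), integral_add hνc (integrable_const d),
    integral_const_mul, integral_const_mul, integral_const, integral_const,
    smul_eq_mul, smul_eq_mul, hbary, hmass']

theorem measureReal_singleton_mul_le_of_dominated_on_Ioo {β β' : Measure ℝ} [IsFiniteMeasure β]
    {a b : ℝ} (hconc : β (Icc a b)ᶜ = 0) (hdom : ∀ y ∈ Ioo a b, β' {y} ≤ β {y}) {g : ℝ → ℝ}
    (hg_nonpos : ∀ y ∈ Icc a b, g y ≤ 0) (hg_nonneg : ∀ y ∉ Ioo a b, 0 ≤ g y) (y : ℝ) :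
    β.real {y} * g y ≤ β'.real {y} * g y := by
  by_cases hy : y ∈ Ioo a b
  · exact mul_le_mul_of_nonpos_right (ENNReal.toReal_mono (measure_ne_top β _) (hdom y hy))
      (hg_nonpos y (Ioo_subset_Icc_self hy))
  by_cases hy' : y ∈ Icc a b
  · simp [le_antisymm (hg_nonpos y hy') (hg_nonneg y hy)]
  · have hβy : β.real {y} = 0 :=
      (measureReal_eq_zero_iff).mpr (measure_mono_null (singleton_subset_iff.mpr hy') hconc)
    rw [hβy, zero_mul]
    exact mul_nonneg measureReal_nonneg (hg_nonneg y hy)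

/-- Let `β` and `β'` be finitely supported finite measures on `ℝ` with equal total mass
and equal barycenters, with `β` concentrated on `[a,b]` and `β'({y}) ≤ β({y})` for all
`y ∈ (a,b)`. Then `β ≤_cx β'`: `∫ f dβ ≤ ∫ f dβ'` for every convex `f : ℝ → ℝ`. -/
theorem convex_order_of_pointwise_domination
    (β β' : Measure ℝ) [IsFiniteMeasure β] [IsFiniteMeasure β']
    (hβfin : ∃ S : Finset ℝ, β ((↑S : Set ℝ)ᶜ) = 0)
    (hβ'fin : ∃ S : Finset ℝ, β' ((↑S : Set ℝ)ᶜ) = 0)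
    (hmass : β Set.univ = β' Set.univ)
    (hbary : ∫ y, y ∂β = ∫ y, y ∂β')
    (a b : ℝ) (hconc : β ((Set.Icc a b)ᶜ) = 0)
    (hdom : ∀ y ∈ Set.Ioo a b, β' {y} ≤ β {y}) :
    ∀ f : ℝ → ℝ, ConvexOn ℝ Set.univ f → ∫ y, f y ∂β ≤ ∫ y, f y ∂β' := by
  intro f hf
  rcases lt_or_ge b a with hba | hab
  · have hβ : β = 0 :=
      Measure.measure_univ_eq_zero.mp (by simpa [Icc_eq_empty_of_lt hba] using hconc)
    have hβ' : β' = 0 := Measure.measure_univ_eq_zero.mp (by simp [← hmass, hβ])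
    simp [hβ, hβ']
  obtain ⟨S₁, hS₁⟩ := hβfin
  obtain ⟨S₂, hS₂⟩ := hβ'fin
  have hβS : β (↑(S₁ ∪ S₂))ᶜ = 0 := measure_mono_null (by simp) hS₁
  have hβ'S : β' (↑(S₁ ∪ S₂))ᶜ = 0 := measure_mono_null (by simp) hS₂
  have hβint (g : ℝ → ℝ) := integrable_of_measure_compl_finset_eq_zero hβS g
  have hβ'int (g : ℝ → ℝ) := integrable_of_measure_compl_finset_eq_zero hβ'S g
  obtain ⟨c, d, hle, hge⟩ := hf.exists_affine_ge_on_Icc_le_off_Ioo hab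
  have haff := integral_affine_eq_of_measure_univ_eq_of_integral_id_eq
    (hβint id) (hβ'int id) hmass hbary c d
  suffices ∫ y, f y - (c * y + d) ∂β ≤ ∫ y, f y - (c * y + d) ∂β' by
    rwa [integral_sub (hβint f) (hβint _), integral_sub (hβ'int f) (hβ'int _), haff,
      sub_le_sub_iff_right] at this
  rw [integral_eq_sum_of_measure_compl_finset_eq_zero hβS,
    integral_eq_sum_of_measure_compl_finset_eq_zero hβ'S]
  exact Finset.sum_le_sum fun y _ => measureReal_singleton_mul_le_of_dominated_on_Ioo hconc hdom
    (fun y hy => sub_nonpos.mpr (hle y hy)) (fun y hy => sub_nonneg.mpr (hge y hy)) y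
end

section
/- Let β and β' be finite measures on ℝ with finite first moments, equal total mass β(ℝ) = β'(ℝ) and equal barycenters ∫ y dβ(y) = ∫ y dβ'(y). If ∫ |y−t| dβ(y) ≤ ∫ |y−t| dβ'(y) for every t ∈ ℝ, then β ≤_cx β', i.e. ∫ f dβ ≤ ∫ f dβ' for every convex function f: ℝ → ℝ for which both integrals exist. Thus the family of functions y ↦ |y−t|, t ∈ ℝ, suffices to describe the convex order of measures on ℝ. -/
/-!
A convex `f : ℝ → ℝ` is the pointwise limit of the upper envelopes `gₙ` of its supporting lines
at the points of a grid of mesh `1 / (n + 1)` on `[-n, n]`, and `ℓ₀ ≤ gₙ ≤ f` for the supporting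
line `ℓ₀` at `0`, so dominated convergence reduces the claim to `∫ gₙ dβ ≤ ∫ gₙ dβ'`. Adding the
lines from left to right, a new line can exceed the envelope only to the right of the previous
base point, where the envelope is the previous line; so each step adds the positive part of an
affine function of nonnegative slope, a nonnegative multiple of a call function
`(y - s)⁺ = (|y - s| + y - s) / 2` or a constant. Affine functions have the same integral under
`β` and `β'` (equal mass and barycenter), call functions a larger one under `β'`.
-/

open MeasureTheory Set Filter Topology

structure IntegralLE {α : Type*} [MeasurableSpace α] (μ ν : Measure α) (g : α → ℝ) : Prop where
  integrable_left : Integrable g μ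
  integrable_right : Integrable g ν
  integral_le : ∫ x, g x ∂μ ≤ ∫ x, g x ∂ν

namespace IntegralLE

variable {α : Type*} [MeasurableSpace α] {μ ν : Measure α} {g h k l : α → ℝ}

lemma add (hg : IntegralLE μ ν g) (hh : IntegralLE μ ν h) :
    IntegralLE μ ν fun x => g x + h x where
  integrable_left := hg.integrable_left.add hh.integrable_left
  integrable_right := hg.integrable_right.add hh.integrable_right
  integral_le := by
    rw [integral_add hg.integrable_left hh.integrable_left,
      integral_add hg.integrable_right hh.integrable_right]
    exact add_le_add hg.integral_le hh.integral_le

lemma const_mul (hg : IntegralLE μ ν g) {c : ℝ} (hc : 0 ≤ c) :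
    IntegralLE μ ν fun x => c * g x where
  integrable_left := hg.integrable_left.const_mul c
  integrable_right := hg.integrable_right.const_mul c
  integral_le := by
    rw [integral_const_mul, integral_const_mul]
    exact mul_le_mul_of_nonneg_left hg.integral_le hc

lemma max_of_posPart_sub (hh : IntegralLE μ ν h) (hkl : IntegralLE μ ν fun x => max (k x - l x) 0)
    (hlh : ∀ x, l x ≤ h x) (hlk : ∀ x, l x < k x → h x = l x) :
    IntegralLE μ ν fun x => max (h x) (k x) := by
  have hsum : (fun x => max (h x) (k x)) = fun x => h x + max (k x - l x) 0 := by
    funext x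
    rcases lt_or_ge (l x) (k x) with hlt | hge
    · rw [hlk x hlt, max_eq_right hlt.le, max_eq_left (sub_nonneg.2 hlt.le)]
      ring
    · rw [max_eq_left (hge.trans (hlh x)), max_eq_right (sub_nonpos.2 hge), add_zero]
  rw [hsum]
  exact hh.add hkl

lemma integral_le_of_tendsto {g : ℕ → α → ℝ} {F G : α → ℝ} (hg : ∀ n, IntegralLE μ ν (g n))
    (hGμ : Integrable G μ) (hGν : Integrable G ν) (hbound : ∀ n x, |g n x| ≤ G x)
    (hlim : ∀ x, Tendsto (fun n => g n x) atTop (𝓝 (F x))) :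
    ∫ x, F x ∂μ ≤ ∫ x, F x ∂ν :=
  le_of_tendsto_of_tendsto'
    (tendsto_integral_of_dominated_convergence G (fun n => (hg n).integrable_left.1) hGμ
      (fun n => ae_of_all _ (hbound n)) (ae_of_all _ hlim))
    (tendsto_integral_of_dominated_convergence G (fun n => (hg n).integrable_right.1) hGν
      (fun n => ae_of_all _ (hbound n)) (ae_of_all _ hlim))
    fun n => (hg n).integral_le

end IntegralLE

section Moments

variable {β β' : Measure ℝ} [IsFiniteMeasure β] [IsFiniteMeasure β']

lemma integralLE_affine (hid : Integrable (fun y => y) β) (hid' : Integrable (fun y => y) β')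
    (hmass : β univ = β' univ) (hbary : ∫ y, y ∂β = ∫ y, y ∂β') (a b t : ℝ) :
    IntegralLE β β' fun y => a + b * (y - t) := by
  have hsub : ∀ {μ : Measure ℝ} [IsFiniteMeasure μ], Integrable (fun y => y) μ →
      Integrable (fun y => y - t) μ :=
    fun hid => hid.sub (integrable_const t)
  have hintegral : ∀ {μ : Measure ℝ} [IsFiniteMeasure μ], Integrable (fun y => y) μ →
      ∫ y, a + b * (y - t) ∂μ = μ.real univ * a + b * (∫ y, y ∂μ - μ.real univ * t) := by
    intro μ _ hid
    rw [integral_add (integrable_const a) ((hsub hid).const_mul b), integral_const_mul,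
      integral_sub hid (integrable_const t), integral_const, integral_const, smul_eq_mul,
      smul_eq_mul]
  have hmassR : β.real univ = β'.real univ := by simp only [measureReal_def, hmass]
  exact ⟨(integrable_const a).add ((hsub hid).const_mul b),
    (integrable_const a).add ((hsub hid').const_mul b),
    by rw [hintegral hid, hintegral hid', hmassR, hbary]⟩

lemma integralLE_posPart_affine (hid : Integrable (fun y => y) β)
    (hid' : Integrable (fun y => y) β')
    (haff : ∀ a b t : ℝ, IntegralLE β β' fun y => a + b * (y - t))
    (hcall : ∀ t : ℝ, ∫ y, |y - t| ∂β ≤ ∫ y, |y - t| ∂β') {b : ℝ} (hb : 0 ≤ b) (a t : ℝ) :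
    IntegralLE β β' fun y => max (a + b * (y - t)) 0 := by
  rcases hb.eq_or_lt with rfl | hb
  · simpa only [zero_mul, add_zero] using haff (max a 0) 0 t
  have habs (s : ℝ) : IntegralLE β β' fun y => |y - s| :=
    ⟨(hid.sub (integrable_const s)).abs, (hid'.sub (integrable_const s)).abs, hcall s⟩
  have hpos : (fun y => max (a + b * (y - t)) 0)
      = fun y => b * (2⁻¹ * (|y - (t - a / b)| + (0 + 1 * (y - (t - a / b))))) := by
    funext y
    have hy : a + b * (y - t) = b * (y - (t - a / b)) := by field_simp; ring
    rcases le_total (y - (t - a / b)) 0 with h | h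
    · rw [hy, abs_of_nonpos h, max_eq_right (mul_nonpos_of_nonneg_of_nonpos hb.le h)]
      ring
    · rw [hy, abs_of_nonneg h, max_eq_left (mul_nonneg hb.le h)]
      ring
  rw [hpos]
  exact (((habs _).add (haff 0 1 _)).const_mul (by norm_num)).const_mul hb.le

end Moments

noncomputable def supportLine (f : ℝ → ℝ) (t y : ℝ) : ℝ :=
  f t + derivWithin f (Ioi t) t * (y - t)

namespace ConvexOn

variable {f : ℝ → ℝ}

lemma monotone_rightDeriv (hf : ConvexOn ℝ univ f) : Monotone fun x => derivWithin f (Ioi x) x :=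
  fun x y hxy => hf.monotoneOn_rightDeriv (by simp) (by simp) hxy

lemma slope_le_rightDeriv (hf : ConvexOn ℝ univ f) {x y : ℝ} (hxy : x < y) :
    slope f x y ≤ derivWithin f (Ioi y) y :=
  (hf.slope_le_leftDeriv_of_mem_interior (mem_univ x) (by simp) hxy).trans
    (hf.leftDeriv_le_rightDeriv_of_mem_interior (by simp))

lemma supportLine_le (hf : ConvexOn ℝ univ f) (t y : ℝ) : supportLine f t y ≤ f y := by
  rcases lt_trichotomy y t with hyt | rfl | hty
  · have h := hf.slope_le_rightDeriv hyt
    rw [slope_def_field, div_le_iff₀ (sub_pos.2 hyt)] at h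
    unfold supportLine
    linarith
  · simp [supportLine]
  · have h := hf.rightDeriv_le_slope_of_mem_interior (by simp) (mem_univ y) hty
    rw [slope_def_field, le_div_iff₀ (sub_pos.2 hty)] at h
    unfold supportLine
    linarith

lemma supportLine_le_supportLine_of_le_left (hf : ConvexOn ℝ univ f) {t u y : ℝ}
    (htu : t ≤ u) (hyt : y ≤ t) : supportLine f u y ≤ supportLine f t y := by
  have hu := hf.supportLine_le u t
  have hslope := hf.monotone_rightDeriv htu
  unfold supportLine at *
  nlinarith [mul_nonneg (sub_nonneg.2 hslope) (sub_nonneg.2 hyt)]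

lemma supportLine_le_supportLine_of_le_right (hf : ConvexOn ℝ univ f) {t u y : ℝ}
    (htu : t ≤ u) (huy : u ≤ y) : supportLine f t y ≤ supportLine f u y := by
  have ht := hf.supportLine_le t u
  have hslope := hf.monotone_rightDeriv htu
  unfold supportLine at *
  nlinarith [mul_nonneg (sub_nonneg.2 hslope) (sub_nonneg.2 huy)]

lemma sub_supportLine_le (hf : ConvexOn ℝ univ f) {a t y : ℝ} (hat : a ≤ t) (hty : t ≤ y) :
    f y - supportLine f t y
      ≤ (derivWithin f (Ioi y) y - derivWithin f (Ioi a) a) * (y - t) := by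
  rcases hty.eq_or_lt with rfl | hty
  · simp [supportLine]
  have hslope := hf.slope_le_rightDeriv hty
  rw [slope_def_field, div_le_iff₀ (sub_pos.2 hty)] at hslope
  have hderiv := hf.monotone_rightDeriv hat
  unfold supportLine
  nlinarith [mul_le_mul_of_nonneg_right hderiv (sub_pos.2 hty).le]

end ConvexOn

lemma integralLE_partialSups_supportLine {μ ν : Measure ℝ} {f : ℝ → ℝ} (hf : ConvexOn ℝ univ f)
    {p : ℕ → ℝ} (hp : Monotone p) (haff : ∀ a b t : ℝ, IntegralLE μ ν fun y => a + b * (y - t))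
    (hcall : ∀ {b : ℝ}, 0 ≤ b → ∀ a t : ℝ, IntegralLE μ ν fun y => max (a + b * (y - t)) 0)
    (k : ℕ) : IntegralLE μ ν (partialSups (fun i => supportLine f (p i)) k) := by
  induction k with
  | zero => exact partialSups_zero (α := ℝ → ℝ) _ ▸ haff _ _ _
  | succ k ih =>
    set ℓ := fun i => supportLine f (p i)
    have hdiff : (fun y => max (ℓ (k + 1) y - ℓ k y) 0) = fun y =>
        max ((f (p (k + 1)) - ℓ k (p (k + 1))) +
          (derivWithin f (Ioi (p (k + 1))) (p (k + 1)) - derivWithin f (Ioi (p k)) (p k)) *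
            (y - p (k + 1))) 0 := by
      funext y
      simp only [ℓ, supportLine]
      ring_nf
    have hcross (y : ℝ) (hy : ℓ k y < ℓ (k + 1) y) : p k < y := by
      by_contra! hyk
      exact hy.not_ge (hf.supportLine_le_supportLine_of_le_left (hp k.le_succ) hyk)
    rw [partialSups_add_one]
    refine IntegralLE.max_of_posPart_sub ih (hdiff ▸ hcall (sub_nonneg.2
      (hf.monotone_rightDeriv (hp k.le_succ))) _ _)
      (fun y => le_partialSups_of_le ℓ le_rfl y) fun y hy => ?_
    refine le_antisymm ?_ (le_partialSups_of_le ℓ le_rfl y)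
    rw [Pi.partialSups_apply]
    exact partialSups_le _ _ _ fun j hj =>
      hf.supportLine_le_supportLine_of_le_right (hp hj) (hcross y hy).le

noncomputable def gridPt (n i : ℕ) : ℝ := i / (n + 1) - n

lemma gridPt_mono (n : ℕ) : Monotone (gridPt n) := fun i j hij => by
  unfold gridPt
  gcongr

lemma gridPt_eq_zero (n : ℕ) : gridPt n (n * (n + 1)) = 0 := by
  unfold gridPt
  push_cast
  field_simp
  ring

lemma exists_gridPt_near {n : ℕ} {y : ℝ} (hy : |y| ≤ n) :
    ∃ i ≤ 2 * n * (n + 1), gridPt n i ≤ y ∧ y - gridPt n i ≤ 1 / (n + 1) := by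
  have hn : (0 : ℝ) < n + 1 := by positivity
  obtain ⟨hy₁, hy₂⟩ := abs_le.1 hy
  refine ⟨⌊(y + n) * (n + 1)⌋₊, Nat.floor_le_of_le ?_, ?_, ?_⟩
  · push_cast
    nlinarith
  · rw [gridPt, sub_le_iff_le_add, div_le_iff₀ hn]
    exact Nat.floor_le (by nlinarith)
  · have h := Nat.lt_floor_add_one ((y + n) * (n + 1))
    rw [gridPt, show y - (⌊(y + n) * (n + 1)⌋₊ / (n + 1) - n : ℝ)
      = ((y + n) * (n + 1) - ⌊(y + n) * (n + 1)⌋₊) / (n + 1) by field_simp; ring]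
    exact div_le_div_of_nonneg_right (by linarith) hn.le

noncomputable def gridEnvelope (f : ℝ → ℝ) (n : ℕ) : ℝ → ℝ :=
  partialSups (fun i => supportLine f (gridPt n i)) (2 * n * (n + 1))

lemma supportLine_le_gridEnvelope (f : ℝ → ℝ) {n i : ℕ} (hi : i ≤ 2 * n * (n + 1)) (y : ℝ) :
    supportLine f (gridPt n i) y ≤ gridEnvelope f n y :=
  le_partialSups_of_le (fun i => supportLine f (gridPt n i)) hi y

namespace ConvexOn

variable {f : ℝ → ℝ}

lemma gridEnvelope_le (hf : ConvexOn ℝ univ f) (n : ℕ) (y : ℝ) : gridEnvelope f n y ≤ f y := by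
  rw [gridEnvelope, Pi.partialSups_apply]
  exact partialSups_le _ _ _ fun i _ => hf.supportLine_le _ y

lemma abs_gridEnvelope_le (hf : ConvexOn ℝ univ f) (n : ℕ) (y : ℝ) :
    |gridEnvelope f n y| ≤ |f y| + |supportLine f 0 y| := by
  have hlower := gridPt_eq_zero n ▸
    supportLine_le_gridEnvelope f (i := n * (n + 1)) (by nlinarith) y
  have hupper := hf.gridEnvelope_le n y
  rw [abs_le]
  constructor <;> linarith [neg_abs_le (supportLine f 0 y), le_abs_self (f y),
    abs_nonneg (f y), abs_nonneg (supportLine f 0 y)]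

lemma tendsto_gridEnvelope (hf : ConvexOn ℝ univ f) (y : ℝ) :
    Tendsto (fun n => gridEnvelope f n y) atTop (𝓝 (f y)) := by
  set C := derivWithin f (Ioi y) y - derivWithin f (Ioi (y - 1)) (y - 1)
  have hC : 0 ≤ C := sub_nonneg.2 (hf.monotone_rightDeriv (by linarith))
  have hlower : ∀ᶠ n : ℕ in atTop, f y - C * (1 / (n + 1)) ≤ gridEnvelope f n y := by
    filter_upwards [eventually_ge_atTop ⌈|y|⌉₊] with n hn
    obtain ⟨i, hi, hiy, hyi⟩ := exists_gridPt_near (Nat.ceil_le.1 hn)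
    have hmesh : 1 / (n + 1 : ℝ) ≤ 1 := by
      rw [div_le_one (by positivity)]
      linarith [n.cast_nonneg (α := ℝ)]
    calc f y - C * (1 / (n + 1)) ≤ f y - C * (y - gridPt n i) := by gcongr
      _ ≤ supportLine f (gridPt n i) y := by
        linarith [hf.sub_supportLine_le (a := y - 1) (by linarith) hiy]
      _ ≤ gridEnvelope f n y := supportLine_le_gridEnvelope f hi y
  have hlim : Tendsto (fun n : ℕ => f y - C * (1 / ((n : ℝ) + 1))) atTop (𝓝 (f y)) := by
    simpa using tendsto_const_nhds.sub (tendsto_one_div_add_atTop_nhds_zero_nat.const_mul C)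
  exact tendsto_of_tendsto_of_tendsto_of_le_of_le' hlim tendsto_const_nhds hlower
    (Eventually.of_forall fun n => hf.gridEnvelope_le n y)

end ConvexOn

/-- The functions `y ↦ |y − t|`, `t ∈ ℝ`, suffice to describe the convex order: if `β`
and `β'` are finite measures on `ℝ` with finite first moments, equal total mass and
equal barycenters, and `∫ |y − t| dβ ≤ ∫ |y − t| dβ'` for all `t`, then `β ≤_cx β'`,
i.e. `∫ f dβ ≤ ∫ f dβ'` for every convex `f` for which both integrals exist. -/
theorem convex_order_of_call_functions
    (β β' : Measure ℝ) [IsFiniteMeasure β] [IsFiniteMeasure β']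
    (hmom : Integrable (fun y => |y|) β) (hmom' : Integrable (fun y => |y|) β')
    (hmass : β Set.univ = β' Set.univ)
    (hbary : ∫ y, y ∂β = ∫ y, y ∂β')
    (hcall : ∀ t : ℝ, ∫ y, |y - t| ∂β ≤ ∫ y, |y - t| ∂β') :
    ∀ f : ℝ → ℝ, ConvexOn ℝ Set.univ f → Integrable f β → Integrable f β' →
      ∫ y, f y ∂β ≤ ∫ y, f y ∂β' := by
  intro f hf hfβ hfβ'
  have hid : Integrable (fun y => y) β :=
    (integrable_norm_iff measurable_id.aestronglyMeasurable).1 hmom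
  have hid' : Integrable (fun y => y) β' :=
    (integrable_norm_iff measurable_id.aestronglyMeasurable).1 hmom'
  have haff := integralLE_affine hid hid' hmass hbary
  have hline := haff (f 0) (derivWithin f (Ioi 0) 0) 0
  exact IntegralLE.integral_le_of_tendsto
    (fun n => integralLE_partialSups_supportLine hf (gridPt_mono n) haff
      (integralLE_posPart_affine hid hid' haff hcall) _)
    (hfβ.abs.add hline.integrable_left.abs) (hfβ'.abs.add hline.integrable_right.abs)
    hf.abs_gridEnvelope_le hf.tendsto_gridEnvelope
end
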